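/- arXiv:1911.12462 — 3 statements merged into one kernel-verified Lean document; each statement's English description precedes it below -/
import Mathlib

section
/- If a bipartite no-signaling resource R (a channel from D(X⊗Y) to D(A⊗B) that is nonsignaling in both directions) has a trivial input for Alice (dim X = 1) and a classical output for Alice (R's output on A is always diagonal in the computational basis), then R is LOSR-free, i.e., R admits a decomposition R = Σ_a P(a) |a⟩⟨a| ⊗ R_a where P is a probability distribution on Alice's outcomes and each R_a is a channel from D(Y) to D(B). -/
open Matrix
open scoped Kronecker BigOperators ComplexOrder

noncomputable section

abbrev Mat (n : ℕ) := Matrix (Fin n) (Fin n) ℂ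

/-- A density matrix: positive semidefinite with unit trace. -/
def IsDensity {n : Type*} [Fintype n] (ρ : Matrix n n ℂ) : Prop :=
  ρ.PosSemidef ∧ ρ.trace = 1

/-- The tensor product `Φ ⊗ Ψ` of two (linear) maps on matrix spaces,
defined by its action on basis slices. -/
def mapKron {α β γ δ : Type*} [Fintype α] [DecidableEq α]
    (Φ : Matrix α α ℂ → Matrix γ γ ℂ) (Ψ : Matrix β β ℂ → Matrix δ δ ℂ)
    (M : Matrix (α × β) (α × β) ℂ) : Matrix (γ × δ) (γ × δ) ℂ :=
  ∑ i : α, ∑ i' : α,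
    (Φ (Matrix.single i i' 1)) ⊗ₖ (Ψ (Matrix.of fun j j' => M (i, j) (i', j')))

/-- A quantum channel: a linear, completely positive, trace-preserving map. -/
def IsCPTP {α γ : Type*} [Fintype α] [DecidableEq α] [Fintype γ]
    (Φ : Matrix α α ℂ → Matrix γ γ ℂ) : Prop :=
  (∀ M N, Φ (M + N) = Φ M + Φ N) ∧
  (∀ (c : ℂ) M, Φ (c • M) = c • Φ M) ∧
  (∀ (n : ℕ) (M : Matrix (α × Fin n) (α × Fin n) ℂ), M.PosSemidef →
     (mapKron Φ (id : Matrix (Fin n) (Fin n) ℂ → Matrix (Fin n) (Fin n) ℂ) M).PosSemidef) ∧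
  (∀ M, (Φ M).trace = M.trace)

/-- Partial trace over the first tensor factor. -/
def ptraceFst {α β : Type*} [Fintype α]
    (M : Matrix (α × β) (α × β) ℂ) : Matrix β β ℂ :=
  Matrix.of fun i j => ∑ k : α, M (k, i) (k, j)

/-- Partial trace over the second tensor factor. -/
def ptraceSnd {α β : Type*} [Fintype β]
    (M : Matrix (α × β) (α × β) ℂ) : Matrix α α ℂ :=
  Matrix.of fun i j => ∑ k : β, M (i, k) (j, k)

/-- The space of bipartite resources `D(X ⊗ Y) → D(A ⊗ B)` (as maps on matrices). -/
abbrev Res (x y a b : ℕ) :=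
  Matrix (Fin x × Fin y) (Fin x × Fin y) ℂ → Matrix (Fin a × Fin b) (Fin a × Fin b) ℂ

/-- A bipartite resource is LOSR-free if it is a convex combination of tensor
products of single-party channels. -/
def IsLOSRFree {x y a b : ℕ} (R : Res x y a b) : Prop :=
  ∃ (k : ℕ) (p : Fin k → ℝ) (RA : Fin k → (Mat x → Mat a)) (RB : Fin k → (Mat y → Mat b)),
    (∀ i, 0 ≤ p i) ∧ (∑ i, p i = 1) ∧
    (∀ i, IsCPTP (RA i)) ∧ (∀ i, IsCPTP (RB i)) ∧
    R = fun M => ∑ i, (p i : ℂ) • mapKron (RA i) (RB i) M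

namespace Stmt0Aux

set_option linter.unusedSectionVars false

variable {n : Type*} [Fintype n] [DecidableEq n]

lemma diag_nonneg {M : Matrix n n ℂ} (hM : M.PosSemidef) (i : n) : 0 ≤ M i i := by
  have h := hM.dotProduct_mulVec_nonneg (Pi.single i 1)
  simpa [dotProduct, mulVec, Pi.single_apply, Finset.mul_sum] using h

lemma psd_smul_real {M : Matrix n n ℂ} {c : ℝ} (hc : 0 ≤ c) (hM : M.PosSemidef) :
    ((c : ℂ) • M).PosSemidef := by
  refine posSemidef_iff_dotProduct_mulVec.mpr ⟨?_, ?_⟩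
  · have h1 := hM.1
    unfold Matrix.IsHermitian at *
    rw [conjTranspose_smul, h1]
    congr 1
    simp [Complex.star_def]
  · intro x
    rw [smul_mulVec, dotProduct_smul]
    exact mul_nonneg (by exact_mod_cast hc) (hM.dotProduct_mulVec_nonneg x)

lemma psd_outer (w : n → ℂ) : (vecMulVec w (star w)).PosSemidef := by
  rw [vecMulVec_eq (Fin 1), ← conjTranspose_replicateCol]
  exact posSemidef_self_mul_conjTranspose _

lemma conjTranspose_kron {l m p q : Type*} (A : Matrix l m ℂ) (B : Matrix p q ℂ) :
    (A ⊗ₖ B)ᴴ = Aᴴ ⊗ₖ Bᴴ := by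
  ext ⟨i, j⟩ ⟨k, l⟩
  simp [conjTranspose_apply, kroneckerMap_apply, star_mul']

lemma psd_kron {m : Type*} [Fintype m] [DecidableEq m]
    {A : Matrix n n ℂ} {B : Matrix m m ℂ} (hA : A.PosSemidef) (hB : B.PosSemidef) :
    (A ⊗ₖ B).PosSemidef := by
  exact hA.kronecker hB

lemma psd_sqrt {m : Type*} [Fintype m] [DecidableEq m] {M : Matrix m m ℂ} (h : M.PosSemidef) :
    ∃ B : Matrix m m ℂ, M = Bᴴ * B := by
  open scoped MatrixOrder in
  obtain ⟨B, hB⟩ := CStarAlgebra.nonneg_iff_eq_star_mul_self.mp h.nonneg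
  exact ⟨B, by simpa [star_eq_conjTranspose] using hB⟩

lemma outer_mem_span (w : n → ℂ) :
    vecMulVec w (star w) ∈ Submodule.span ℂ {ρ : Matrix n n ℂ | IsDensity ρ} := by
  set r : ℝ := ∑ p, Complex.normSq (w p) with hr
  have htr : (vecMulVec w (star w)).trace = (r : ℂ) := by
    simp [Matrix.trace, Matrix.diag, vecMulVec_apply, hr, Complex.mul_conj]
  rcases eq_or_ne r 0 with h0 | h0
  · have hw : w = 0 := by
      funext p
      have hnn : ∀ p ∈ Finset.univ, (0:ℝ) ≤ Complex.normSq (w p) := fun p _ => Complex.normSq_nonneg _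
      have h2 := (Finset.sum_eq_zero_iff_of_nonneg hnn).mp (by rw [← hr, h0])
      exact Complex.normSq_eq_zero.mp (h2 p (Finset.mem_univ p))
    rw [hw]
    have : vecMulVec (0 : n → ℂ) (star (0 : n → ℂ)) = 0 := by
      ext p q; simp [vecMulVec_apply]
    rw [this]
    exact Submodule.zero_mem _
  · have hrpos : 0 ≤ r := Finset.sum_nonneg fun p _ => Complex.normSq_nonneg _
    have hmem : ((r⁻¹ : ℝ) : ℂ) • vecMulVec w (star w) ∈ {ρ : Matrix n n ℂ | IsDensity ρ} := by
      refine ⟨psd_smul_real (inv_nonneg.mpr hrpos) (psd_outer w), ?_⟩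
      rw [trace_smul, htr, smul_eq_mul]
      push_cast
      field_simp
    have := Submodule.smul_mem (Submodule.span ℂ {ρ : Matrix n n ℂ | IsDensity ρ}) ((r : ℂ))
      (Submodule.subset_span hmem)
    rwa [smul_smul, ← Complex.ofReal_mul, mul_inv_cancel₀ h0, Complex.ofReal_one, one_smul] at this

lemma vecMulVec_single (a b : n) :
    vecMulVec (Pi.single a (1:ℂ)) (star (Pi.single b (1:ℂ))) = single a b (1:ℂ) := by
  ext p q
  simp only [vecMulVec_apply, Pi.star_apply, Pi.single_apply, single,
    Matrix.of_apply, apply_ite (star : ℂ → ℂ), star_one, star_zero]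
  split_ifs <;> simp_all

lemma isDensity_stdBasis (a : n) : IsDensity (single a a (1:ℂ)) := by
  constructor
  · rw [← vecMulVec_single a a]; exact psd_outer _
  · exact Matrix.trace_single_eq_same a (1:ℂ)

lemma stdBasis_mem_span (j j' : n) :
    single j j' (1:ℂ) ∈ Submodule.span ℂ {ρ : Matrix n n ℂ | IsDensity ρ} := by
  set u : n → ℂ := Pi.single j 1 with hu
  set v : n → ℂ := Pi.single j' 1 with hv
  have h1 := outer_mem_span (u + v)
  have h2 := outer_mem_span (u + Complex.I • v)
  have h3 := outer_mem_span u
  have h4 := outer_mem_span v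
  have hadd : ∀ (w₁ w₂ x : n → ℂ), vecMulVec (w₁ + w₂) x = vecMulVec w₁ x + vecMulVec w₂ x := by
    intros; ext p q; simp [vecMulVec_apply]; ring
  have haddr : ∀ (w x₁ x₂ : n → ℂ), vecMulVec w (x₁ + x₂) = vecMulVec w x₁ + vecMulVec w x₂ := by
    intros; ext p q; simp [vecMulVec_apply]; ring
  have hsml : ∀ (c : ℂ) (w x : n → ℂ), vecMulVec (c • w) x = c • vecMulVec w x := by
    intros; ext p q; simp [vecMulVec_apply]; ring
  have hsmr : ∀ (c : ℂ) (w x : n → ℂ), vecMulVec w (c • x) = c • vecMulVec w x := by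
    intros; ext p q; simp [vecMulVec_apply]; ring
  have hout : ∀ (a b : n), vecMulVec (Pi.single a (1:ℂ)) (star (Pi.single b (1:ℂ)))
      = single a b (1:ℂ) := vecMulVec_single
  have hstar : star (Complex.I • v) = (-Complex.I) • star v := by
    ext p; simp [Pi.star_apply, Complex.star_def, mul_comm]
  have key : single j j' (1:ℂ) =
      (1/2 : ℂ) • vecMulVec (u + v) (star (u + v))
      + (Complex.I/2) • vecMulVec (u + Complex.I • v) (star (u + Complex.I • v))
      - ((1+Complex.I)/2) • vecMulVec u (star u)
      - ((1+Complex.I)/2) • vecMulVec v (star v) := by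
    simp only [star_add, hstar]
    simp only [hadd, haddr, hsml, hsmr, hu, hv, hout]
    match_scalars
    · linear_combination ((1:ℂ)/2) * Complex.I_mul_I
    · ring
    · linear_combination (-(1:ℂ)/2) * Complex.I_mul_I
    · linear_combination (Complex.I/2) * Complex.I_mul_I
  rw [key]
  exact sub_mem (sub_mem (add_mem (Submodule.smul_mem _ _ h1) (Submodule.smul_mem _ _ h2))
    (Submodule.smul_mem _ _ h3)) (Submodule.smul_mem _ _ h4)

lemma span_densities_top : Submodule.span ℂ {ρ : Matrix n n ℂ | IsDensity ρ} = ⊤ := by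
  rw [eq_top_iff]
  rintro ψ -
  rw [matrix_eq_sum_single ψ]
  refine Submodule.sum_mem _ fun i _ => Submodule.sum_mem _ fun k _ => ?_
  have h : single i k (ψ i k) = ψ i k • single i k (1:ℂ) := by
    rw [smul_single, smul_eq_mul, mul_one]
  rw [h]
  exact Submodule.smul_mem _ _ (stdBasis_mem_span i k)

lemma eq_on_densities {W : Type*} [AddCommMonoid W] [Module ℂ W]
    (f g : Matrix n n ℂ →ₗ[ℂ] W) (h : ∀ ρ, IsDensity ρ → f ρ = g ρ) (ψ : Matrix n n ℂ) :
    f ψ = g ψ := by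
  have := LinearMap.ext_on (span_densities_top (n := n)) (fun ρ hρ => h ρ hρ)
  exact DFunLike.congr_fun this ψ

end Stmt0Aux

open Stmt0Aux

set_option maxHeartbeats 2000000 in
/-- a no-signaling bipartite resource with trivial input and classical
output for Alice is LOSR-free: it decomposes as `Σ_a P(a) |a⟩⟨a| ⊗ R_a`. -/
theorem stmt0 {y a b : ℕ} (hy : 0 < y) (ha : 0 < a) (hb : 0 < b)
    (R : Matrix (Fin 1 × Fin y) (Fin 1 × Fin y) ℂ →
         Matrix (Fin a × Fin b) (Fin a × Fin b) ℂ)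
    (hR : IsCPTP R)
    (hNSAtoB : ∀ (ξ ξ' : Mat 1) (ψ : Mat y), IsDensity ξ → IsDensity ξ' → IsDensity ψ →
      ptraceFst (R (ξ ⊗ₖ ψ)) = ptraceFst (R (ξ' ⊗ₖ ψ)))
    (hNSBtoA : ∀ (ξ : Mat 1) (ψ ψ' : Mat y), IsDensity ξ → IsDensity ψ → IsDensity ψ' →
      ptraceSnd (R (ξ ⊗ₖ ψ)) = ptraceSnd (R (ξ ⊗ₖ ψ')))
    (hclass : ∀ (ξ : Mat 1) (ψ : Mat y), IsDensity ξ → IsDensity ψ →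
      ∀ (i j : Fin a), i ≠ j → ∀ (β β' : Fin b), R (ξ ⊗ₖ ψ) (i, β) (j, β') = 0) :
    ∃ (P : Fin a → ℝ) (Rb : Fin a → (Mat y → Mat b)),
      (∀ i, 0 ≤ P i) ∧ (∑ i, P i = 1) ∧ (∀ i, IsCPTP (Rb i)) ∧
      R = fun M => ∑ i, (P i : ℂ) •
        ((Matrix.single i i (1 : ℂ)) ⊗ₖ
          (Rb i (Matrix.of fun j j' => M ((0 : Fin 1), j) ((0 : Fin 1), j')))) := by
  classical
  obtain ⟨hadd, hsmul, hcp, htp⟩ := hR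
  -- bundled linear version of R
  let Rl : Matrix (Fin 1 × Fin y) (Fin 1 × Fin y) ℂ →ₗ[ℂ] Matrix (Fin a × Fin b) (Fin a × Fin b) ℂ :=
    { toFun := R, map_add' := hadd, map_smul' := hsmul }
  have hRl : ∀ M, Rl M = R M := fun _ => rfl
  -- embedding of Bob's space into the (trivial ⊗ Bob) space
  let emb : Mat y →ₗ[ℂ] Matrix (Fin 1 × Fin y) (Fin 1 × Fin y) ℂ :=
    { toFun := fun ψ => ψ.submatrix Prod.snd Prod.snd
      map_add' := fun _ _ => rfl
      map_smul' := fun _ _ => rfl }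
  let S : Mat y →ₗ[ℂ] Matrix (Fin a × Fin b) (Fin a × Fin b) ℂ := Rl.comp emb
  have hSapp : ∀ ψ : Mat y, S ψ = R (ψ.submatrix Prod.snd Prod.snd) := fun _ => rfl
  have hembkron : ∀ ψ : Mat y, (1 : Mat 1) ⊗ₖ ψ = ψ.submatrix Prod.snd Prod.snd := by
    intro ψ
    ext ⟨p, k⟩ ⟨q, l⟩
    have hpq : p = q := Subsingleton.elim p q
    subst hpq
    simp [Matrix.one_apply, Matrix.kroneckerMap_apply]
  have hone : IsDensity (1 : Mat 1) := by
    refine ⟨Matrix.PosSemidef.one, ?_⟩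
    simp [Matrix.trace_one]
  have hMemb : ∀ M : Matrix (Fin 1 × Fin y) (Fin 1 × Fin y) ℂ,
      (Matrix.of fun j j' => M ((0 : Fin 1), j) ((0 : Fin 1), j')).submatrix
        (Prod.snd : Fin 1 × Fin y → Fin y) Prod.snd = M := by
    intro M; ext ⟨p, k⟩ ⟨q, l⟩
    have hp : p = 0 := Subsingleton.elim p 0
    have hq : q = 0 := Subsingleton.elim q 0
    subst hp; subst hq; rfl
  have htremb : ∀ ψ : Mat y,
      (ψ.submatrix (Prod.snd : Fin 1 × Fin y → Fin y) Prod.snd).trace = ψ.trace := by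
    intro ψ
    simp [Matrix.trace, Matrix.diag, Fintype.sum_prod_type, Fin.sum_univ_one]
  have hembDens : ∀ ψ : Mat y, IsDensity ψ →
      IsDensity (ψ.submatrix (Prod.snd : Fin 1 × Fin y → Fin y) Prod.snd) := by
    intro ψ hψ
    exact ⟨hψ.1.submatrix _, by rw [htremb]; exact hψ.2⟩
  -- std basis matrices are compatible with the embedding
  have hstd_emb : ∀ (j j' : Fin y),
      (single j j' (1:ℂ)).submatrix (Prod.snd : Fin 1 × Fin y → Fin y) Prod.snd
        = single ((0 : Fin 1), j) ((0 : Fin 1), j') (1:ℂ) := by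
    intro j j'
    ext ⟨p, k⟩ ⟨q, l⟩
    simp [single, Prod.ext_iff, eq_iff_true_of_subsingleton]
  -- R turns sums of std basis matrices into sums
  have hRsum : ∀ N : Matrix (Fin 1 × Fin y) (Fin 1 × Fin y) ℂ,
      R N = ∑ i : Fin 1 × Fin y, ∑ i' : Fin 1 × Fin y, N i i' • R (single i i' 1) := by
    intro N
    conv_lhs => rw [matrix_eq_sum_single N]
    show Rl _ = _
    rw [map_sum]
    refine Finset.sum_congr rfl fun i _ => ?_
    rw [map_sum]
    refine Finset.sum_congr rfl fun i' _ => ?_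
    have h : single i i' (N i i') = N i i' • single i i' (1:ℂ) := by
      rw [smul_single, smul_eq_mul, mul_one]
    rw [h, LinearMap.map_smul]
    rfl
  -- R preserves positive semidefiniteness
  have hRpsd : ∀ N : Matrix (Fin 1 × Fin y) (Fin 1 × Fin y) ℂ, N.PosSemidef → (R N).PosSemidef := by
    intro N hN
    have h2 := hcp 1 (N.submatrix Prod.fst Prod.fst) (hN.submatrix _)
    have key : R N = (mapKron R (id : Mat 1 → Mat 1) (N.submatrix Prod.fst Prod.fst)).submatrix
        (fun p => (p, (0 : Fin 1))) (fun p => (p, (0 : Fin 1))) := by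
      ext p q
      rw [hRsum N]
      simp only [mapKron, Matrix.submatrix_apply, Matrix.sum_apply, Matrix.kroneckerMap_apply,
        id_eq, Matrix.of_apply, Matrix.smul_apply, smul_eq_mul]
      exact Finset.sum_congr rfl fun i _ => Finset.sum_congr rfl fun i' _ => mul_comm _ _
    rw [key]
    exact h2.submatrix _
  -- mapKron for the Bob-restricted channel
  have hmapS : ∀ (m : ℕ) (M : Matrix (Fin y × Fin m) (Fin y × Fin m) ℂ),
      mapKron (fun ψ : Mat y => R (ψ.submatrix Prod.snd Prod.snd)) (id : Mat m → Mat m) M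
        = mapKron R (id : Mat m → Mat m)
            (M.submatrix (fun p => ((p.1.2 : Fin y), p.2)) (fun p => (p.1.2, p.2))) := by
    intro m M
    unfold mapKron
    rw [Fintype.sum_prod_type, Fin.sum_univ_one]
    refine Finset.sum_congr rfl fun j _ => ?_
    rw [Fintype.sum_prod_type, Fin.sum_univ_one]
    refine Finset.sum_congr rfl fun j' _ => ?_
    rw [← hstd_emb]
    rfl
  have hScp : ∀ (m : ℕ) (M : Matrix (Fin y × Fin m) (Fin y × Fin m) ℂ), M.PosSemidef →
      (mapKron (fun ψ : Mat y => R (ψ.submatrix Prod.snd Prod.snd))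
        (id : Mat m → Mat m) M).PosSemidef := by
    intro m M hM
    rw [hmapS]
    exact hcp m _ (hM.submatrix _)
  -- reference density for Bob
  set z : Fin y := ⟨0, hy⟩ with hz
  set σ : Mat y := single z z 1 with hσdef
  have hσ : IsDensity σ := isDensity_stdBasis z
  set D : Mat a := ptraceSnd (R (σ.submatrix Prod.snd Prod.snd)) with hD
  set P : Fin a → ℝ := fun i => (D i i).re with hP
  -- no-signaling: the Alice marginal is independent of Bob's input
  let ptl : Matrix (Fin a × Fin b) (Fin a × Fin b) ℂ →ₗ[ℂ] Mat a :=
    { toFun := ptraceSnd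
      map_add' := by intro A B; ext i j; simp [ptraceSnd, Finset.sum_add_distrib]
      map_smul' := by intro c A; ext i j; simp [ptraceSnd, Finset.mul_sum] }
  have hNS : ∀ ψ : Mat y, ptraceSnd (R (ψ.submatrix Prod.snd Prod.snd)) = ψ.trace • D := by
    intro ψ
    have h := eq_on_densities (ptl.comp S)
      ((Matrix.traceLinearMap (Fin y) ℂ ℂ).smulRight D)
      (fun ρ hρ => by
        show ptraceSnd (R (ρ.submatrix Prod.snd Prod.snd)) = ρ.trace • D
        rw [hρ.2, one_smul, hD, ← hembkron, ← hembkron]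
        exact hNSBtoA 1 ρ σ hone hρ hσ) ψ
    exact h
  -- classical output: off-diagonal blocks vanish
  have hclassAll : ∀ (ψ : Mat y) (i j : Fin a), i ≠ j → ∀ β β' : Fin b,
      R (ψ.submatrix Prod.snd Prod.snd) (i, β) (j, β') = 0 := by
    intro ψ i j hij β β'
    let ev : Matrix (Fin a × Fin b) (Fin a × Fin b) ℂ →ₗ[ℂ] ℂ :=
      { toFun := fun A => A (i, β) (j, β'), map_add' := fun _ _ => rfl,
        map_smul' := fun _ _ => rfl }
    have h := eq_on_densities (ev.comp S) 0
      (fun ρ hρ => by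
        show R (ρ.submatrix Prod.snd Prod.snd) (i, β) (j, β') = 0
        rw [← hembkron]
        exact hclass 1 ρ hone hρ i j hij β β') ψ
    exact h
  -- properties of P
  have hDpos : ∀ i, 0 ≤ D i i := by
    intro i
    have hpsd := hRpsd _ (hembDens σ hσ).1
    have : D i i = ∑ k : Fin b, R (σ.submatrix Prod.snd Prod.snd) (i, k) (i, k) := rfl
    rw [this]
    exact Finset.sum_nonneg fun k _ => diag_nonneg hpsd (i, k)
  have hDre : ∀ i, D i i = ((P i : ℝ) : ℂ) := by
    intro i
    have h := Complex.le_def.mp (hDpos i)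
    apply Complex.ext
    · rfl
    · simpa using h.2.symm
  have hPpos : ∀ i, 0 ≤ P i := by
    intro i
    have h := Complex.le_def.mp (hDpos i)
    simpa using h.1
  have hPsum : ∑ i, P i = 1 := by
    have h1 : ∑ i, D i i = 1 := by
      have htr : (R (σ.submatrix Prod.snd Prod.snd)).trace = 1 := by
        rw [htp, htremb, hσ.2]
      rw [← htr]
      rw [Matrix.trace]
      rw [Fintype.sum_prod_type]
      rfl
    have h2 : ((∑ i, P i : ℝ) : ℂ) = 1 := by
      push_cast
      rw [← h1]
      exact Finset.sum_congr rfl fun i _ => (hDre i).symm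
    exact_mod_cast h2
  -- vanishing diagonal blocks when P i = 0
  have hzero : ∀ i : Fin a, P i = 0 → ∀ (ψ : Mat y) (β β' : Fin b),
      R (ψ.submatrix Prod.snd Prod.snd) (i, β) (i, β') = 0 := by
    intro i hPi
    have hdens : ∀ ρ : Mat y, IsDensity ρ → ∀ β β' : Fin b,
        R (ρ.submatrix Prod.snd Prod.snd) (i, β) (i, β') = 0 := by
      intro ρ hρ
      have hpsd := hRpsd _ (hembDens ρ hρ).1
      obtain ⟨B, hB⟩ := psd_sqrt hpsd
      have hsum0 : ∑ k : Fin b, R (ρ.submatrix Prod.snd Prod.snd) (i, k) (i, k) = 0 := by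
        have h1 : ptraceSnd (R (ρ.submatrix Prod.snd Prod.snd)) i i = 0 := by
          rw [hNS ρ, hρ.2, one_smul, hDre i, hPi]
          simp
        exact h1
      have hdg : ∀ k : Fin b, R (ρ.submatrix Prod.snd Prod.snd) (i, k) (i, k) = 0 := by
        have hnn : ∀ k ∈ Finset.univ, (0:ℂ) ≤ R (ρ.submatrix Prod.snd Prod.snd) (i, k) (i, k) :=
          fun k _ => diag_nonneg hpsd (i, k)
        intro k
        exact (Finset.sum_eq_zero_iff_of_nonneg hnn).mp hsum0 k (Finset.mem_univ k)
      have hBcol : ∀ (k : Fin b) (w : Fin a × Fin b), B w (i, k) = 0 := by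
        intro k
        have h0 : star (fun w => B w (i, k)) ⬝ᵥ (fun w => B w (i, k)) = 0 := by
          have h1 := hdg k
          rw [hB] at h1
          simpa [Matrix.mul_apply, Matrix.conjTranspose_apply, dotProduct] using h1
        have h2 := dotProduct_star_self_eq_zero.mp h0
        intro w
        exact congrFun h2 w
      intro β β'
      rw [hB]
      simp only [Matrix.mul_apply, Matrix.conjTranspose_apply]
      refine Finset.sum_eq_zero fun w _ => ?_
      rw [hBcol β w]
      simp
    intro ψ β β'
    let ev : Matrix (Fin a × Fin b) (Fin a × Fin b) ℂ →ₗ[ℂ] ℂ :=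
      { toFun := fun A => A (i, β) (i, β'), map_add' := fun _ _ => rfl,
        map_smul' := fun _ _ => rfl }
    have h := eq_on_densities (ev.comp S) 0 (fun ρ hρ => hdens ρ hρ β β') ψ
    exact h
  -- Bob's channels
  set zb : Fin b := ⟨0, hb⟩ with hzb
  set ρ0 : Mat b := single zb zb 1 with hρ0
  have hρ0dens : IsDensity ρ0 := isDensity_stdBasis zb
  set Rb : Fin a → Mat y → Mat b := fun i ψ =>
    if P i = 0 then ψ.trace • ρ0
    else (((P i : ℝ) : ℂ))⁻¹ •
      Matrix.of fun β β' => R (ψ.submatrix Prod.snd Prod.snd) (i, β) (i, β') with hRb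
  have htrstd : ∀ j j' : Fin y, (single j j' (1:ℂ)).trace = if j = j' then 1 else 0 := by
    intro j j'
    split_ifs with h
    · subst h; exact Matrix.trace_single_eq_same j (1:ℂ)
    · exact Matrix.trace_single_eq_of_ne j j' (1:ℂ) h
  have hRbCPTP : ∀ i, IsCPTP (Rb i) := by
    intro i
    by_cases hPi : P i = 0
    · refine ⟨?_, ?_, ?_, ?_⟩
      · intro M N; simp [hRb, hPi, Matrix.trace_add, add_smul]
      · intro c M; simp [hRb, hPi, Matrix.trace_smul, smul_smul]
      · intro m M hM
        have hkey : mapKron (Rb i) (id : Mat m → Mat m) M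
            = ρ0 ⊗ₖ (Matrix.of fun k l => ∑ j : Fin y, M (j, k) (j, l)) := by
          ext ⟨β, k⟩ ⟨β', l⟩
          simp only [mapKron, hRb, if_pos hPi, Matrix.sum_apply, Matrix.kroneckerMap_apply,
            Matrix.smul_apply, id_eq, Matrix.of_apply, smul_eq_mul, htrstd]
          rw [Finset.mul_sum]
          rw [Finset.sum_comm]
          refine Finset.sum_congr rfl fun j _ => ?_
          rw [Finset.sum_eq_single j]
          · simp [mul_comm, mul_assoc, mul_left_comm]
          · intro j' _ hj'; simp [hj', Ne.symm hj']
          · simp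
        rw [hkey]
        refine psd_kron hρ0dens.1 (posSemidef_iff_dotProduct_mulVec.mpr ⟨?_, ?_⟩)
        · ext k l
          simp only [Matrix.conjTranspose_apply, Matrix.of_apply, star_sum]
          refine Finset.sum_congr rfl fun j _ => ?_
          have := hM.1
          calc star (M (j, l) (j, k)) = Mᴴ (j, k) (j, l) := rfl
            _ = M (j, k) (j, l) := by rw [hM.1]
        · intro x
          have hterm : ∀ j : Fin y,
              (0:ℂ) ≤ star (fun p : Fin y × Fin m => if p.1 = j then x p.2 else 0) ⬝ᵥ
                M *ᵥ (fun p : Fin y × Fin m => if p.1 = j then x p.2 else 0) :=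
            fun j => hM.dotProduct_mulVec_nonneg _
          have hterm_eq : ∀ j : Fin y,
              star (fun p : Fin y × Fin m => if p.1 = j then x p.2 else 0) ⬝ᵥ
                M *ᵥ (fun p : Fin y × Fin m => if p.1 = j then x p.2 else 0)
              = ∑ k : Fin m, ∑ l : Fin m, star (x k) * (M (j, k) (j, l) * x l) := by
            intro j
            have collapse : ∀ (u : Fin m → ℂ) (g : Fin y × Fin m → ℂ),
                (∑ p : Fin y × Fin m, (if p.1 = j then u p.2 else 0) * g p)
                  = ∑ k, u k * g (j, k) := by
              intro u g
              rw [Fintype.sum_prod_type]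
              rw [Finset.sum_eq_single j]
              · simp
              · intro j' _ hj'
                simp [hj']
              · simp
            have hmv : ∀ k : Fin m,
                (M *ᵥ (fun p : Fin y × Fin m => if p.1 = j then x p.2 else 0)) (j, k)
                  = ∑ l, x l * M (j, k) (j, l) := by
              intro k
              show (∑ q : Fin y × Fin m, M (j, k) q * (if q.1 = j then x q.2 else 0))
                  = ∑ l, x l * M (j, k) (j, l)
              rw [show (∑ q : Fin y × Fin m, M (j, k) q * (if q.1 = j then x q.2 else 0))
                  = ∑ q : Fin y × Fin m, (if q.1 = j then x q.2 else 0) * M (j, k) q from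
                Finset.sum_congr rfl fun q _ => mul_comm _ _]
              exact collapse x (fun q => M (j, k) q)
            have hstarv : ∀ p : Fin y × Fin m,
                star (if p.1 = j then x p.2 else 0) = (if p.1 = j then star (x p.2) else 0) := by
              intro p; split_ifs <;> simp
            calc star (fun p : Fin y × Fin m => if p.1 = j then x p.2 else 0) ⬝ᵥ
                M *ᵥ (fun p : Fin y × Fin m => if p.1 = j then x p.2 else 0)
                = ∑ p : Fin y × Fin m, (if p.1 = j then star (x p.2) else 0) *
                    (M *ᵥ (fun p : Fin y × Fin m => if p.1 = j then x p.2 else 0)) p := by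
                  refine Finset.sum_congr rfl fun p _ => ?_
                  rw [Pi.star_apply, hstarv p]
              _ = ∑ k, star (x k) *
                    (M *ᵥ (fun p : Fin y × Fin m => if p.1 = j then x p.2 else 0)) (j, k) :=
                  collapse (fun k => star (x k))
                    (M *ᵥ (fun p : Fin y × Fin m => if p.1 = j then x p.2 else 0))
              _ = ∑ k : Fin m, ∑ l : Fin m, star (x k) * (M (j, k) (j, l) * x l) := by
                  refine Finset.sum_congr rfl fun k _ => ?_
                  rw [hmv k, Finset.mul_sum]
                  refine Finset.sum_congr rfl fun l _ => ?_
                  ring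
          have hswap : ∀ f : Fin m → Fin m → Fin y → ℂ,
              ∑ k, ∑ l, ∑ j, f k l j = ∑ j, ∑ k, ∑ l, f k l j := by
            intro f
            calc ∑ k, ∑ l, ∑ j, f k l j = ∑ k, ∑ j, ∑ l, f k l j :=
                  Finset.sum_congr rfl fun k _ => Finset.sum_comm
              _ = ∑ j, ∑ k, ∑ l, f k l j := Finset.sum_comm
          have hcalc : star x ⬝ᵥ (Matrix.of fun k l => ∑ j : Fin y, M (j, k) (j, l)) *ᵥ x
              = ∑ j : Fin y, star (fun p : Fin y × Fin m => if p.1 = j then x p.2 else 0) ⬝ᵥ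
                M *ᵥ (fun p : Fin y × Fin m => if p.1 = j then x p.2 else 0) := by
            have h1 : star x ⬝ᵥ (Matrix.of fun k l => ∑ j : Fin y, M (j, k) (j, l)) *ᵥ x
                = ∑ k, ∑ l, ∑ j, star (x k) * (M (j, k) (j, l) * x l) := by
              simp only [dotProduct, Matrix.mulVec, Pi.star_apply, Matrix.of_apply,
                Finset.sum_mul, Finset.mul_sum]
            rw [h1, hswap]
            exact Finset.sum_congr rfl fun j _ => (hterm_eq j).symm
          rw [hcalc]
          exact Finset.sum_nonneg fun j _ => hterm j
      · intro M
        simp [hRb, hPi, Matrix.trace_smul, hρ0dens.2]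
    · have hPiC : ((P i : ℝ) : ℂ) ≠ 0 := by exact_mod_cast hPi
      refine ⟨?_, ?_, ?_, ?_⟩
      · intro M N
        simp only [hRb, if_neg hPi]
        have h1 : ((M + N).submatrix (Prod.snd : Fin 1 × Fin y → Fin y)
              (Prod.snd : Fin 1 × Fin y → Fin y) : Matrix (Fin 1 × Fin y) (Fin 1 × Fin y) ℂ)
            = M.submatrix (Prod.snd : Fin 1 × Fin y → Fin y) (Prod.snd : Fin 1 × Fin y → Fin y)
              + N.submatrix (Prod.snd : Fin 1 × Fin y → Fin y)
                (Prod.snd : Fin 1 × Fin y → Fin y) := rfl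
        rw [h1, hadd]
        ext β β'
        simp [mul_add]
      · intro c M
        simp only [hRb, if_neg hPi]
        have h1 : ((c • M).submatrix (Prod.snd : Fin 1 × Fin y → Fin y)
              (Prod.snd : Fin 1 × Fin y → Fin y) : Matrix (Fin 1 × Fin y) (Fin 1 × Fin y) ℂ)
            = c • M.submatrix (Prod.snd : Fin 1 × Fin y → Fin y)
              (Prod.snd : Fin 1 × Fin y → Fin y) := rfl
        rw [h1, hsmul]
        ext β β'
        simp [Matrix.smul_apply]
        ring
      · intro m M hM
        have hkey : mapKron (Rb i) (id : Mat m → Mat m) M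
            = (((P i : ℝ) : ℂ))⁻¹ •
              ((mapKron (fun ψ : Mat y => R (ψ.submatrix Prod.snd Prod.snd))
                (id : Mat m → Mat m) M).submatrix
                (fun p : Fin b × Fin m => ((i, p.1), p.2))
                (fun p : Fin b × Fin m => ((i, p.1), p.2))) := by
          ext ⟨β, k⟩ ⟨β', l⟩
          simp only [mapKron, hRb, if_neg hPi, Matrix.sum_apply, Matrix.kroneckerMap_apply,
            Matrix.smul_apply, Matrix.of_apply, id_eq, Matrix.submatrix_apply, smul_eq_mul,
            Finset.mul_sum]
          refine Finset.sum_congr rfl fun j _ => Finset.sum_congr rfl fun j' _ => ?_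
          ring
        rw [hkey]
        have h1 := hScp m M hM
        have h2 := h1.submatrix (fun p : Fin b × Fin m => ((i, p.1), p.2))
        have h3 : (0:ℝ) ≤ (P i)⁻¹ := inv_nonneg.mpr (hPpos i)
        have h4 := psd_smul_real h3 h2
        rwa [Complex.ofReal_inv] at h4
      · intro M
        simp only [hRb, if_neg hPi, Matrix.trace_smul]
        have h1 : (Matrix.of fun β β' =>
            R (M.submatrix Prod.snd Prod.snd) (i, β) (i, β')).trace
            = ptraceSnd (R (M.submatrix Prod.snd Prod.snd)) i i := rfl
        rw [h1, hNS M]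
        have h2 : (M.trace • D) i i = M.trace * ((P i : ℝ) : ℂ) := by
          rw [← hDre i]; rfl
        rw [h2, smul_eq_mul]
        field_simp
  refine ⟨P, Rb, hPpos, hPsum, hRbCPTP, ?_⟩
  funext M
  have hMe : M = (Matrix.of fun j j' => M ((0 : Fin 1), j) ((0 : Fin 1), j')).submatrix
      (Prod.snd : Fin 1 × Fin y → Fin y) Prod.snd := (hMemb M).symm
  set ψ : Mat y := Matrix.of fun j j' => M ((0 : Fin 1), j) ((0 : Fin 1), j') with hψdef
  ext ⟨i, β⟩ ⟨j, β'⟩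
  simp only [Matrix.sum_apply, Matrix.smul_apply, Matrix.kroneckerMap_apply, smul_eq_mul]
  by_cases hij : i = j
  · subst hij
    rw [Finset.sum_eq_single_of_mem i (Finset.mem_univ i) (fun k _ hk => by
      have hzk : single k k (1:ℂ) i i = 0 := by simp [single, hk]
      rw [hzk]; ring)]
    have hstd1 : single i i (1:ℂ) i i = 1 := by simp [single]
    rw [hstd1, one_mul]
    by_cases hPi : P i = 0
    · rw [hPi]
      simp only [Complex.ofReal_zero, zero_mul]
      conv_lhs => rw [hMe]
      exact hzero i hPi ψ β β'
    · simp only [hRb, if_neg hPi, Matrix.smul_apply, Matrix.of_apply, smul_eq_mul]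
      conv_lhs => rw [hMe]
      rw [← mul_assoc, mul_inv_cancel₀ (by exact_mod_cast hPi : ((P i : ℝ):ℂ) ≠ 0), one_mul]
  · have hstd0 : ∀ k : Fin a, single k k (1:ℂ) i j = 0 := by
      intro k
      simp only [single, Matrix.of_apply]
      rw [if_neg]
      rintro ⟨rfl, rfl⟩
      exact hij rfl
    rw [Finset.sum_eq_zero]
    · conv_lhs => rw [hMe]
      exact hclassAll ψ i j hij β β'
    · intro k _
      rw [hstd0 k]
      ring
end
end

section
/- The Tsirelson box P_Tsi(ab|xy) = (1 + (−1)^{a+b+xy}/√2)/4 has absolute robustness (√2 − 1)/2 with respect to the local (LOSR-free) polytope: the minimum s ≥ 0 such that (P_Tsi + sL)/(1+s) is a local box for some local box L equals (√2−1)/2. -/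
/-! Local boxes obey the CHSH inequality |I| ≤ 2 (for a product of local strategies, I is
`A₀(B₀ + B₁) + A₁(B₀ − B₁)` with correlators in [−1, 1]), while I(P_Tsi) = 2√2.
By linearity of I, if `(P_Tsi + sL)/(1 + s)` is local then `2√2 + s I(L) ≤ 2(1 + s)`, and
`I(L) ≥ −2` forces `s ≥ (√2 − 1)/2`. Equality is attained with `L` the isotropic box of
correlation −1/2: the mixture is then the isotropic box of correlation 1/2, the uniform mixture
of the eight deterministic strategies that win the CHSH game on three of the four inputs. -/

open scoped BigOperators

noncomputable section

/-- A bipartite box with binary inputs and outputs: `P a b x y` is the probability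
of outputs `(a, b)` given inputs `(x, y)`. -/
abbrev Box := Fin 2 → Fin 2 → Fin 2 → Fin 2 → ℝ

/-- A no-signaling box: nonnegative, normalized, and no-signaling in both
directions. -/
def IsNSBox (P : Box) : Prop :=
  (∀ a b x y, 0 ≤ P a b x y) ∧
  (∀ x y, ∑ a, ∑ b, P a b x y = 1) ∧
  (∀ a x y y', ∑ b, P a b x y = ∑ b, P a b x y') ∧
  (∀ b x x' y, ∑ a, P a b x y = ∑ a, P a b x' y)

/-- A local (LOSR-free) box: a convex combination of products of local (stochastic)
strategies. -/
def IsLocalBox (P : Box) : Prop :=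
  ∃ (k : ℕ) (q : Fin k → ℝ) (PA PB : Fin k → Fin 2 → Fin 2 → ℝ),
    (∀ i, 0 ≤ q i) ∧ (∑ i, q i = 1) ∧
    (∀ i a x, 0 ≤ PA i a x) ∧ (∀ i x, ∑ a, PA i a x = 1) ∧
    (∀ i b y, 0 ≤ PB i b y) ∧ (∀ i y, ∑ b, PB i b y = 1) ∧
    ∀ a b x y, P a b x y = ∑ i, q i * PA i a x * PB i b y

/-- The CHSH functional. -/
def chsh (P : Box) : ℝ :=
  ∑ a, ∑ b, ∑ x, ∑ y, (-1 : ℝ) ^ (a.val + b.val + x.val * y.val) * P a b x y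

/-- The Tsirelson box. -/
def PTsi : Box := fun a b x y =>
  (1 + (-1 : ℝ) ^ (a.val + b.val + x.val * y.val) / Real.sqrt 2) / 4

lemma chsh_sum {k : ℕ} (q : Fin k → ℝ) (P : Fin k → Box) :
    chsh (fun a b x y => ∑ i, q i * P i a b x y) = ∑ i, q i * chsh (P i) := by
  simp only [chsh, Fin.sum_univ_two, Finset.mul_sum, ← Finset.sum_add_distrib]
  refine Finset.sum_congr rfl fun i _ => ?_
  ring

lemma chsh_mix (P Q : Box) (s t : ℝ) :
    chsh (fun a b x y => (P a b x y + s * Q a b x y) / t) = (chsh P + s * chsh Q) / t := by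
  simp only [chsh, Fin.sum_univ_two]
  ring

lemma chsh_product (A B : Fin 2 → Fin 2 → ℝ) :
    chsh (fun a b x y => A a x * B b y) =
      (A 0 0 - A 1 0) * ((B 0 0 - B 1 0) + (B 0 1 - B 1 1)) +
        (A 0 1 - A 1 1) * ((B 0 0 - B 1 0) - (B 0 1 - B 1 1)) := by
  simp only [chsh, Fin.sum_univ_two, Fin.val_zero, Fin.val_one]
  ring

lemma abs_sub_le_one_of_add_eq_one {p₀ p₁ : ℝ} (h₀ : 0 ≤ p₀) (h₁ : 0 ≤ p₁)
    (h : p₀ + p₁ = 1) : |p₀ - p₁| ≤ 1 :=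
  abs_le.2 ⟨by linarith, by linarith⟩

lemma abs_mul_add_add_mul_sub_le_two {a b c d : ℝ} (ha : |a| ≤ 1) (hb : |b| ≤ 1)
    (hc : |c| ≤ 1) (hd : |d| ≤ 1) : |a * (c + d) + b * (c - d)| ≤ 2 :=
  calc |a * (c + d) + b * (c - d)| ≤ |a| * |c + d| + |b| * |c - d| := by
        simpa only [abs_mul] using abs_add_le (a * (c + d)) (b * (c - d))
    _ ≤ |c + d| + |c - d| :=
        add_le_add (mul_le_of_le_one_left (abs_nonneg _) ha)
          (mul_le_of_le_one_left (abs_nonneg _) hb)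
    _ ≤ 2 := by
        rw [abs_le] at hc hd
        rcases abs_cases (c + d) with ⟨h, _⟩ | ⟨h, _⟩ <;>
          rcases abs_cases (c - d) with ⟨h', _⟩ | ⟨h', _⟩ <;> linarith

lemma IsLocalBox.abs_chsh_le_two {P : Box} (hP : IsLocalBox P) : |chsh P| ≤ 2 := by
  obtain ⟨k, q, PA, PB, hq, hq1, hA, hA1, hB, hB1, hP⟩ := hP
  have hP_sum : P = fun a b x y => ∑ i, q i * (PA i a x * PB i b y) := by
    ext a b x y
    simp only [hP, mul_assoc]
  have hcorrA : ∀ i x, |PA i 0 x - PA i 1 x| ≤ 1 := fun i x =>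
    abs_sub_le_one_of_add_eq_one (hA i 0 x) (hA i 1 x)
      (by simpa only [Fin.sum_univ_two] using hA1 i x)
  have hcorrB : ∀ i y, |PB i 0 y - PB i 1 y| ≤ 1 := fun i y =>
    abs_sub_le_one_of_add_eq_one (hB i 0 y) (hB i 1 y)
      (by simpa only [Fin.sum_univ_two] using hB1 i y)
  rw [hP_sum, chsh_sum]
  calc |∑ i, q i * chsh (fun a b x y => PA i a x * PB i b y)|
      ≤ ∑ i, |q i * chsh (fun a b x y => PA i a x * PB i b y)| := Finset.abs_sum_le_sum_abs _ _
    _ ≤ ∑ i, q i * 2 := by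
        gcongr with i
        rw [abs_mul, abs_of_nonneg (hq i), chsh_product]
        exact mul_le_mul_of_nonneg_left (abs_mul_add_add_mul_sub_le_two
          (hcorrA i 0) (hcorrA i 1) (hcorrB i 0) (hcorrB i 1)) (hq i)
    _ = 2 := by rw [← Finset.sum_mul, hq1, one_mul]

lemma isLocalBox_of_fintype {ι : Type*} [Fintype ι] (P : Box) (q : ι → ℝ)
    (PA PB : ι → Fin 2 → Fin 2 → ℝ) (hq : ∀ i, 0 ≤ q i) (hq1 : ∑ i, q i = 1)
    (hA : ∀ i a x, 0 ≤ PA i a x) (hA1 : ∀ i x, ∑ a, PA i a x = 1)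
    (hB : ∀ i b y, 0 ≤ PB i b y) (hB1 : ∀ i y, ∑ b, PB i b y = 1)
    (hP : ∀ a b x y, P a b x y = ∑ i, q i * PA i a x * PB i b y) : IsLocalBox P := by
  let e := (Fintype.equivFin ι).symm
  refine ⟨Fintype.card ι, q ∘ e, PA ∘ e, PB ∘ e, fun i => hq _, ?_, fun i => hA _,
    fun i => hA1 _, fun i => hB _, fun i => hB1 _, fun a b x y => ?_⟩
  · rw [← hq1]; exact e.sum_comp q
  · rw [hP]; exact (e.sum_comp fun i => q i * PA i a x * PB i b y).symm

def isotropicBox (c : ℝ) : Box := fun a b x y =>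
  (1 + (-1 : ℝ) ^ (a.val + b.val + x.val * y.val) * c) / 4

lemma isotropicBox_mix (c d s : ℝ) (hs : 1 + s ≠ 0) :
    (fun a b x y => (isotropicBox c a b x y + s * isotropicBox d a b x y) / (1 + s)) =
      isotropicBox ((c + s * d) / (1 + s)) := by
  ext a b x y
  simp only [isotropicBox]
  field_simp
  ring

lemma chsh_isotropicBox (c : ℝ) : chsh (isotropicBox c) = 4 * c := by
  simp only [chsh, isotropicBox, Fin.sum_univ_two, Fin.val_zero, Fin.val_one]
  ring

/-- Alice answers `α + p x` and Bob `α + q y + p q + β`. For `β = 0`,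
`a + b + x y = (x + q)(y + p)` in `Fin 2`, so each of these eight strategies wins the CHSH game
except at the one input `(q + 1, p + 1)`; `β = 1` flips Bob's output. -/
lemma isLocalBox_isotropicBox_half (β : Fin 2) :
    IsLocalBox (isotropicBox ((-1) ^ β.val / 2)) := by
  refine isLocalBox_of_fintype _ (fun _ : Fin 2 × Fin 2 × Fin 2 => 1 / 8)
    (fun i a x => if a = i.1 + i.2.1 * x then 1 else 0)
    (fun i b y => if b = i.1 + i.2.2 * y + i.2.1 * i.2.2 + β then 1 else 0)
    (fun _ => by norm_num) (by simp) (fun _ _ _ => by positivity) (fun _ _ => by simp)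
    (fun _ _ _ => by positivity) (fun _ _ => by simp) fun a b x y => ?_
  fin_cases β <;> fin_cases a <;> fin_cases b <;> fin_cases x <;> fin_cases y <;>
    simp [isotropicBox, Fintype.sum_prod_type, Fin.sum_univ_two] <;> norm_num

lemma PTsi_eq_isotropicBox : PTsi = isotropicBox (Real.sqrt 2)⁻¹ := by
  ext a b x y
  simp only [PTsi, isotropicBox, div_eq_mul_inv]

lemma chsh_PTsi : chsh PTsi = 2 * Real.sqrt 2 := by
  rw [PTsi_eq_isotropicBox, chsh_isotropicBox]
  field_simp
  linarith [Real.mul_self_sqrt (zero_le_two : (0 : ℝ) ≤ 2)]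

/-- the absolute robustness of the Tsirelson box with respect to the
local polytope equals `(√2 − 1)/2`. -/
theorem stmt5 :
    sInf {s : ℝ | 0 ≤ s ∧ ∃ L, IsLocalBox L ∧
        IsLocalBox (fun a b x y => (PTsi a b x y + s * L a b x y) / (1 + s))} =
      (Real.sqrt 2 - 1) / 2 := by
  have hsqrt : Real.sqrt 2 * Real.sqrt 2 = 2 := Real.mul_self_sqrt zero_le_two
  have hsqrt_gt : 1 < Real.sqrt 2 := Real.one_lt_sqrt_two
  refine IsLeast.csInf_eq ⟨⟨by linarith, isotropicBox (-1 / 2), ?_, ?_⟩, ?_⟩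
  · simpa using isLocalBox_isotropicBox_half 1
  · rw [PTsi_eq_isotropicBox, isotropicBox_mix _ _ _ (by linarith)]
    convert isLocalBox_isotropicBox_half 0 using 2
    rw [Fin.val_zero, pow_zero, div_eq_iff (by linarith)]
    field_simp
    linear_combination -2 * hsqrt
  · rintro s ⟨hs, L, hL, hmix⟩
    have hmix_le := (abs_le.1 hmix.abs_chsh_le_two).2
    have hL_ge : s * -2 ≤ s * chsh L :=
      mul_le_mul_of_nonneg_left (abs_le.1 hL.abs_chsh_le_two).1 hs
    rw [chsh_mix, chsh_PTsi, div_le_iff₀ (by linarith)] at hmix_le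
    nlinarith
end
end

section
/- Suppose party A|X is classical with finitely many deterministic strategies {J^λ_{AX}}_λ spanning the extreme points of single-party channels from X to A. Then a bipartite Choi state J_{ABXY} corresponds to an LOSR-free resource if and only if it can be written as J = Σ_λ J^λ_{AX} ⊗ Ĵ^λ_{BY} where each Ĵ^λ_{BY} lies in the conic extension of the set of Choi states of single-party channels D(Y)→D(B) and Σ_λ tr-normalizations sum appropriately (Σ_λ tr Ĵ^λ / dim Y' = 1). -/
open Matrix
open scoped Kronecker BigOperators ComplexOrder

noncomputable section

/-- `J` is the (normalized) Choi state of a single-party channel: positive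
semidefinite with partial trace over the output equal to `𝟙/dim`. -/
def IsChoiChannel {b y : ℕ} (J : Matrix (Fin b × Fin y) (Fin b × Fin y) ℂ) : Prop :=
  J.PosSemidef ∧ ptraceFst J = (y : ℂ)⁻¹ • (1 : Mat y)

/-- `J` is the Choi state of a classical (diagonal) single-party channel. -/
def IsClassicalChoi {a x : ℕ} (J : Matrix (Fin a × Fin x) (Fin a × Fin x) ℂ) : Prop :=
  IsChoiChannel J ∧ ∀ u v : Fin a × Fin x, u ≠ v → J u v = 0

/-- The Choi state of the deterministic classical channel given by `lam : X → A`. -/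
def detChoi {a x : ℕ} (lam : Fin x → Fin a) :
    Matrix (Fin a × Fin x) (Fin a × Fin x) ℂ :=
  Matrix.of fun u v =>
    if u.2 = v.2 ∧ u.1 = lam u.2 ∧ v.1 = lam v.2 then (x : ℂ)⁻¹ else 0

/-- A bipartite Choi state is LOSR-free: a convex combination of products of a
classical single-party Choi state for Alice and a channel Choi state for Bob. -/
def IsFreeChoi {a x b y : ℕ}
    (J : Matrix ((Fin a × Fin x) × (Fin b × Fin y))
                ((Fin a × Fin x) × (Fin b × Fin y)) ℂ) : Prop :=
  ∃ (k : ℕ) (p : Fin k → ℝ)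
    (JA : Fin k → Matrix (Fin a × Fin x) (Fin a × Fin x) ℂ)
    (JB : Fin k → Matrix (Fin b × Fin y) (Fin b × Fin y) ℂ),
    (∀ i, 0 ≤ p i) ∧ (∑ i, p i = 1) ∧
    (∀ i, IsClassicalChoi (JA i)) ∧ (∀ i, IsChoiChannel (JB i)) ∧
    J = ∑ i, (p i : ℂ) • (JA i ⊗ₖ JB i)

section AuxLemmas

lemma ptraceFst_smul {α β : Type*} [Fintype α] (c : ℂ) (M : Matrix (α × β) (α × β) ℂ) :
    ptraceFst (c • M) = c • ptraceFst M := by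
  ext i j; simp [ptraceFst, Finset.mul_sum]

lemma ptraceFst_sum {ι α β : Type*} [Fintype α] (s : Finset ι)
    (f : ι → Matrix (α × β) (α × β) ℂ) :
    ptraceFst (∑ i ∈ s, f i) = ∑ i ∈ s, ptraceFst (f i) := by
  ext i j
  simp only [ptraceFst, Matrix.of_apply, Matrix.sum_apply]
  exact Finset.sum_comm

lemma psd_real_smul {n : Type*} [Fintype n] {c : ℝ} (hc : 0 ≤ c)
    {M : Matrix n n ℂ} (h : M.PosSemidef) : ((c : ℂ) • M).PosSemidef := by
  rw [Matrix.posSemidef_iff_dotProduct_mulVec]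
  constructor
  · have h1 : M.conjTranspose = M := h.1
    show ((c : ℂ) • M).conjTranspose = (c : ℂ) • M
    rw [Matrix.conjTranspose_smul, h1, Complex.star_def, Complex.conj_ofReal]
  · intro v
    have h2 := h.dotProduct_mulVec_nonneg v
    have : star v ⬝ᵥ ((c : ℂ) • M) *ᵥ v = (c : ℂ) * (star v ⬝ᵥ M *ᵥ v) := by
      simp [Matrix.smul_mulVec, dotProduct_smul]
    rw [this]
    exact mul_nonneg (Complex.zero_le_real.2 hc) h2

lemma psd_sum {ι n : Type*} [Fintype n] (s : Finset ι) (f : ι → Matrix n n ℂ)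
    (h : ∀ i ∈ s, (f i).PosSemidef) : (∑ i ∈ s, f i).PosSemidef := by
  classical
  induction s using Finset.induction_on with
  | empty => simpa using Matrix.PosSemidef.zero
  | insert _ _ hnotmem ih =>
    rw [Finset.sum_insert hnotmem]
    exact ((h _ (Finset.mem_insert_self _ _)).add
      (ih fun i hi => h i (Finset.mem_insert_of_mem hi)))

lemma choi_trace {b y : ℕ} (hy : 0 < y)
    {J : Matrix (Fin b × Fin y) (Fin b × Fin y) ℂ} (h : IsChoiChannel J) :
    J.trace = 1 := by
  have hcol : ∀ i : Fin y, (∑ k : Fin b, J (k, i) (k, i)) = (y : ℂ)⁻¹ := by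
    intro i
    have h1 : ptraceFst J i i = ((y : ℂ)⁻¹ • (1 : Mat y)) i i := by rw [h.2]
    simpa [ptraceFst, Matrix.smul_apply, Matrix.one_apply] using h1
  have hy' : (y : ℂ) ≠ 0 := by exact_mod_cast hy.ne'
  rw [Matrix.trace]
  rw [show (∑ u : Fin b × Fin y, J.diag u) = ∑ k : Fin b, ∑ i : Fin y, J (k, i) (k, i) from
    Fintype.sum_prod_type _]
  rw [Finset.sum_comm]
  simp only [hcol]
  simp [Finset.sum_const, hy']

lemma detChoi_eq_diagonal {a x : ℕ} (lam : Fin x → Fin a) :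
    detChoi lam =
      Matrix.diagonal (fun u : Fin a × Fin x => if u.1 = lam u.2 then (x : ℂ)⁻¹ else 0) := by
  ext u v
  rw [show detChoi lam u v = (if u.2 = v.2 ∧ u.1 = lam u.2 ∧ v.1 = lam v.2 then (x : ℂ)⁻¹ else 0)
    from rfl, Matrix.diagonal_apply]
  by_cases h : u = v
  · subst h
    by_cases h1 : u.1 = lam u.2 <;> simp [h1]
  · rw [if_neg h, if_neg]
    rintro ⟨h2, h1, h1'⟩
    exact h (Prod.ext (by rw [h1, h2, ← h1']) h2)

lemma inv_cast_nonneg (x : ℕ) : (0 : ℂ) ≤ (x : ℂ)⁻¹ := by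
  have : (x : ℂ)⁻¹ = (((x : ℝ)⁻¹ : ℝ) : ℂ) := by push_cast; ring
  rw [this]
  exact Complex.zero_le_real.2 (inv_nonneg.2 (Nat.cast_nonneg x))

lemma detChoi_isClassical {a x : ℕ} (hx : 0 < x) (lam : Fin x → Fin a) :
    IsClassicalChoi (detChoi lam) := by
  have hx' : (x : ℂ) ≠ 0 := by exact_mod_cast hx.ne'
  refine ⟨⟨?_, ?_⟩, ?_⟩
  · rw [detChoi_eq_diagonal]
    refine Matrix.PosSemidef.diagonal fun u => ?_
    dsimp only
    split
    · exact inv_cast_nonneg x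
    · exact le_refl 0
  · ext x1 x2
    simp only [ptraceFst, Matrix.of_apply, detChoi, Matrix.smul_apply, Matrix.one_apply,
      smul_eq_mul]
    by_cases h : x1 = x2
    · subst h
      rw [Finset.sum_eq_single (lam x1)]
      · simp
      · intro k _ hk; simp [hk]
      · simp
    · simp [h]
  · intro u v huv
    rw [detChoi_eq_diagonal]
    exact Matrix.diagonal_apply_ne _ huv

lemma classical_decomp {a x : ℕ} (hx : 0 < x)
    {JA : Matrix (Fin a × Fin x) (Fin a × Fin x) ℂ} (h : IsClassicalChoi JA) :
    ∃ w : (Fin x → Fin a) → ℝ, (∀ lam, 0 ≤ w lam) ∧ (∑ lam, w lam = 1) ∧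
      JA = ∑ lam, (w lam : ℂ) • detChoi lam := by
  classical
  obtain ⟨⟨hpsd, hpt⟩, hoff⟩ := h
  have hx' : (x : ℝ) ≠ 0 := by exact_mod_cast hx.ne'
  have hxC : (x : ℂ) ≠ 0 := by exact_mod_cast hx.ne'
  -- the diagonal entries are nonnegative reals
  have hdiag0 : ∀ u : Fin a × Fin x, 0 ≤ JA u u := by
    intro u
    have h0 := hpsd.dotProduct_mulVec_nonneg (Pi.single u 1)
    have heq : star (Pi.single u (1:ℂ)) ⬝ᵥ JA *ᵥ Pi.single u 1 = JA u u := by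
      simp [Matrix.mulVec_single, dotProduct, Pi.single_apply]
    rwa [heq] at h0
  have hdiag : ∀ u : Fin a × Fin x, JA u u = ((JA u u).re : ℂ) := by
    intro u
    obtain ⟨_, him⟩ := Complex.nonneg_iff.1 (hdiag0 u)
    exact Complex.ext rfl (by simp [← him])
  set r : Fin x → Fin a → ℝ := fun x' a' => x * (JA (a', x') (a', x')).re with hr
  have hrnn : ∀ x' a', 0 ≤ r x' a' :=
    fun x' a' => mul_nonneg (Nat.cast_nonneg x) (Complex.nonneg_iff.1 (hdiag0 (a', x'))).1
  have hrow : ∀ x', (∑ a', r x' a') = 1 := by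
    intro x'
    have h1 : ptraceFst JA x' x' = ((x : ℂ)⁻¹ • (1 : Mat x)) x' x' := by rw [hpt]
    have h2 : (∑ a' : Fin a, JA (a', x') (a', x')) = (x : ℂ)⁻¹ := by
      simpa [ptraceFst, Matrix.smul_apply, Matrix.one_apply] using h1
    have h3 : (∑ a' : Fin a, (JA (a', x') (a', x')).re) = (x : ℝ)⁻¹ := by
      have := congrArg Complex.re h2
      simpa [Complex.re_sum] using this
    simp only [hr, ← Finset.mul_sum, h3]
    field_simp
  set w : (Fin x → Fin a) → ℝ := fun lam => ∏ x', r x' (lam x') with hw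
  have hwnn : ∀ lam, 0 ≤ w lam := fun lam => Finset.prod_nonneg fun x' _ => hrnn x' (lam x')
  have hwsum : (∑ lam, w lam) = 1 := by
    have := Finset.prod_univ_sum (fun _ : Fin x => (Finset.univ : Finset (Fin a)))
      (fun x' a' => r x' a')
    rw [Fintype.piFinset_univ] at this
    rw [hw, ← this]
    simp [hrow]
  have key : ∀ (x0 : Fin x) (a0 : Fin a),
      (∑ lam : Fin x → Fin a, w lam * (if a0 = lam x0 then 1 else 0)) = r x0 a0 := by
    intro x0 a0
    have hps := Finset.prod_univ_sum (fun _ : Fin x => (Finset.univ : Finset (Fin a)))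
      (fun x' a' => if x' = x0 then (if a0 = a' then r x' a' else 0) else r x' a')
    rw [Fintype.piFinset_univ] at hps
    have hL : (∏ x' : Fin x, ∑ a' : Fin a,
        (if x' = x0 then (if a0 = a' then r x' a' else 0) else r x' a')) = r x0 a0 := by
      rw [Finset.prod_eq_single x0]
      · simp
      · intro x' _ hx'0
        simp only [if_neg hx'0]
        exact hrow x'
      · simp
    have hR : ∀ lam : Fin x → Fin a,
        (∏ x' : Fin x, (if x' = x0 then (if a0 = lam x' then r x' (lam x') else 0)
            else r x' (lam x'))) = w lam * (if a0 = lam x0 then 1 else 0) := by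
      intro lam
      by_cases hcase : a0 = lam x0
      · rw [if_pos hcase, mul_one, hw]
        refine Finset.prod_congr rfl fun x' _ => ?_
        by_cases hx'0 : x' = x0
        · subst hx'0; simp [hcase]
        · simp [hx'0]
      · rw [if_neg hcase, mul_zero]
        refine Finset.prod_eq_zero (Finset.mem_univ x0) ?_
        simp [hcase]
      -- done
    rw [hL] at hps
    rw [hps]
    exact Finset.sum_congr rfl fun lam _ => (hR lam).symm
  refine ⟨w, hwnn, hwsum, ?_⟩
  ext u v
  rw [Matrix.sum_apply]
  by_cases huv : u = v
  · subst huv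
    obtain ⟨a0, x0⟩ := u
    have hterm : ∀ lam : Fin x → Fin a,
        ((w lam : ℂ) • detChoi lam) (a0, x0) (a0, x0)
          = ((w lam * (if a0 = lam x0 then (x : ℝ)⁻¹ else 0) : ℝ) : ℂ) := by
      intro lam
      simp only [Matrix.smul_apply, detChoi, Matrix.of_apply, smul_eq_mul]
      by_cases hcase : a0 = lam x0
      · simp [hcase]
      · simp [hcase]
    rw [Finset.sum_congr rfl fun lam _ => hterm lam, ← Complex.ofReal_sum]
    have hsum : (∑ lam : Fin x → Fin a, w lam * (if a0 = lam x0 then (x : ℝ)⁻¹ else 0))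
        = (JA (a0, x0) (a0, x0)).re := by
      have : ∀ lam : Fin x → Fin a,
          w lam * (if a0 = lam x0 then (x : ℝ)⁻¹ else 0)
            = (x : ℝ)⁻¹ * (w lam * (if a0 = lam x0 then 1 else 0)) := by
        intro lam; split <;> ring
      rw [Finset.sum_congr rfl fun lam _ => this lam, ← Finset.mul_sum, key x0 a0, hr]
      dsimp only
      field_simp
    rw [hsum, ← hdiag]
  · rw [hoff u v huv]
    refine (Finset.sum_eq_zero fun lam _ => ?_).symm
    rw [Matrix.smul_apply, detChoi_eq_diagonal, Matrix.diagonal_apply_ne _ huv, smul_zero]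

lemma sum_kron {ι m n : Type*} (s : Finset ι) (f : ι → Matrix m m ℂ) (B : Matrix n n ℂ) :
    (∑ i ∈ s, f i) ⊗ₖ B = ∑ i ∈ s, (f i ⊗ₖ B) := by
  ext ⟨i, j⟩ ⟨k, l⟩
  simp [Matrix.kroneckerMap_apply, Matrix.sum_apply, Finset.sum_mul]

lemma kron_sum {ι m n : Type*} (s : Finset ι) (A : Matrix m m ℂ) (f : ι → Matrix n n ℂ) :
    A ⊗ₖ (∑ i ∈ s, f i) = ∑ i ∈ s, (A ⊗ₖ f i) := by
  ext ⟨i, j⟩ ⟨k, l⟩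
  simp [Matrix.kroneckerMap_apply, Matrix.sum_apply, Finset.mul_sum]

lemma choi_unit {b y : ℕ} (hb : 0 < b) (hy : 0 < y) :
    IsChoiChannel ((((((b : ℝ) * (y : ℝ))⁻¹ : ℝ) : ℂ)) • (1 : Matrix (Fin b × Fin y) (Fin b × Fin y) ℂ)) := by
  have hb' : (b : ℂ) ≠ 0 := by exact_mod_cast hb.ne'
  have hy' : (y : ℂ) ≠ 0 := by exact_mod_cast hy.ne'
  constructor
  · exact psd_real_smul (inv_nonneg.2 (by positivity)) Matrix.PosSemidef.one
  · ext i j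
    simp only [ptraceFst, Matrix.of_apply, Matrix.smul_apply, Matrix.one_apply, smul_eq_mul]
    by_cases h : i = j
    · subst h
      simp only [if_pos rfl, Finset.sum_const, Finset.card_univ, Fintype.card_fin,
        nsmul_eq_mul, mul_one]
      push_cast
      field_simp
    · rw [Finset.sum_eq_zero (fun k _ => by
        rw [if_neg (by simp [Prod.ext_iff, h]), mul_zero]), if_neg h, mul_zero]

end AuxLemmas

/-- when Alice is classical, a bipartite Choi state is LOSR-free iff
it decomposes as `Σ_λ J^λ_{AX} ⊗ Ĵ^λ_{BY}` over the deterministic strategies `λ`,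
with each `Ĵ^λ` in the conic extension of the channel Choi states and the traces
summing to one. -/
theorem stmt14 {a x b y : ℕ} (ha : 0 < a) (hx : 0 < x) (hb : 0 < b) (hy : 0 < y)
    (J : Matrix ((Fin a × Fin x) × (Fin b × Fin y))
                ((Fin a × Fin x) × (Fin b × Fin y)) ℂ) :
    IsFreeChoi J ↔
      ∃ Jh : (Fin x → Fin a) → Matrix (Fin b × Fin y) (Fin b × Fin y) ℂ,
        (∀ lam, ∃ (α : ℝ) (K : Matrix (Fin b × Fin y) (Fin b × Fin y) ℂ),
          0 ≤ α ∧ IsChoiChannel K ∧ Jh lam = (α : ℂ) • K) ∧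
        (∑ lam : Fin x → Fin a, (Jh lam).trace = 1) ∧
        J = ∑ lam : Fin x → Fin a, (detChoi lam) ⊗ₖ (Jh lam) := by
  classical
  constructor
  · rintro ⟨k, p, JA, JB, hp0, hp1, hJA, hJB, hJ⟩
    choose w hw0 hw1 hwd using fun i => classical_decomp hx (hJA i)
    set Jh : (Fin x → Fin a) → Matrix (Fin b × Fin y) (Fin b × Fin y) ℂ :=
      fun lam => ∑ i, ((p i * w i lam : ℝ) : ℂ) • JB i with hJh
    have hc0 : ∀ i lam, 0 ≤ p i * w i lam := fun i lam => mul_nonneg (hp0 i) (hw0 i lam)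
    refine ⟨Jh, ?_, ?_, ?_⟩
    · intro lam
      by_cases hα : (∑ i, p i * w i lam) = 0
      · have hz : ∀ i ∈ (Finset.univ : Finset (Fin k)), p i * w i lam = 0 := fun i hi =>
          (Finset.sum_eq_zero_iff_of_nonneg (fun i _ => hc0 i lam)).1 hα i hi
        refine ⟨0, _, le_refl 0, choi_unit hb hy, ?_⟩
        rw [hJh]
        simp only [Complex.ofReal_zero, zero_smul]
        exact Finset.sum_eq_zero fun i hi => by rw [hz i hi]; simp
      · have hαpos : 0 < ∑ i, p i * w i lam :=
          lt_of_le_of_ne (Finset.sum_nonneg fun i _ => hc0 i lam) (Ne.symm hα)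
        refine ⟨∑ i, p i * w i lam, (((∑ i, p i * w i lam)⁻¹ : ℝ) : ℂ) • Jh lam,
          hαpos.le, ⟨?_, ?_⟩, ?_⟩
        · exact psd_real_smul (inv_nonneg.2 hαpos.le)
            (psd_sum _ _ fun i _ => psd_real_smul (hc0 i lam) (hJB i).1)
        · rw [ptraceFst_smul]
          simp only [hJh]
          rw [ptraceFst_sum _ (fun i => ((p i * w i lam : ℝ) : ℂ) • JB i)]
          have hpt : ∀ i : Fin k, ptraceFst (((p i * w i lam : ℝ) : ℂ) • JB i)
              = ((p i * w i lam : ℝ) : ℂ) • ((y : ℂ)⁻¹ • (1 : Mat y)) := by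
            intro i; rw [ptraceFst_smul, (hJB i).2]
          rw [Finset.sum_congr rfl fun i _ => hpt i, ← Finset.sum_smul, smul_smul,
            ← Complex.ofReal_sum, ← Complex.ofReal_mul, inv_mul_cancel₀ hα,
            Complex.ofReal_one, one_smul]
        · rw [smul_smul, ← Complex.ofReal_mul, mul_inv_cancel₀ hα, Complex.ofReal_one, one_smul]
    · have htrB : ∀ i, (JB i).trace = 1 := fun i => choi_trace hy (hJB i)
      have hte : ∀ lam, (Jh lam).trace = ((∑ i, p i * w i lam : ℝ) : ℂ) := by
        intro lam
        simp only [hJh]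
        rw [Matrix.trace_sum, Complex.ofReal_sum]
        refine Finset.sum_congr rfl fun i _ => ?_
        rw [Matrix.trace_smul, htrB i, smul_eq_mul, mul_one]
      rw [Finset.sum_congr rfl fun lam (_ : lam ∈ Finset.univ) => hte lam, ← Complex.ofReal_sum]
      have hreal : (∑ lam : Fin x → Fin a, ∑ i, p i * w i lam) = 1 := by
        rw [Finset.sum_comm]
        calc (∑ i, ∑ lam : Fin x → Fin a, p i * w i lam) = ∑ i, p i := by
              refine Finset.sum_congr rfl fun i _ => ?_
              rw [← Finset.mul_sum, hw1 i, mul_one]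
          _ = 1 := hp1
      rw [hreal, Complex.ofReal_one]
    · rw [hJ]
      calc (∑ i, (p i : ℂ) • (JA i ⊗ₖ JB i))
          = ∑ i, ∑ lam : Fin x → Fin a,
              ((p i * w i lam : ℝ) : ℂ) • (detChoi lam ⊗ₖ JB i) := by
            refine Finset.sum_congr rfl fun i _ => ?_
            rw [hwd i, sum_kron, Finset.smul_sum]
            refine Finset.sum_congr rfl fun lam _ => ?_
            rw [Matrix.smul_kronecker, smul_smul, ← Complex.ofReal_mul]
        _ = ∑ lam : Fin x → Fin a, ∑ i,
              ((p i * w i lam : ℝ) : ℂ) • (detChoi lam ⊗ₖ JB i) := Finset.sum_comm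
        _ = ∑ lam : Fin x → Fin a, detChoi lam ⊗ₖ Jh lam := by
            refine Finset.sum_congr rfl fun lam _ => ?_
            simp only [hJh]
            rw [kron_sum]
            exact Finset.sum_congr rfl fun i _ => (Matrix.kronecker_smul _ _ _).symm
  · rintro ⟨Jh, hconic, htr, hJ⟩
    choose α K hα0 hK hJh using hconic
    have e := Fintype.equivFin (Fin x → Fin a)
    refine ⟨Fintype.card (Fin x → Fin a), fun i => α (e.symm i), fun i => detChoi (e.symm i),
      fun i => K (e.symm i), fun i => hα0 _, ?_, fun i => detChoi_isClassical hx _,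
      fun i => hK _, ?_⟩
    · have h1 : (∑ lam : Fin x → Fin a, ((α lam : ℝ) : ℂ)) = 1 := by
        rw [← htr]
        refine (Finset.sum_congr rfl fun lam _ => ?_).symm
        rw [hJh lam, Matrix.trace_smul, choi_trace hy (hK lam), smul_eq_mul, mul_one]
      have h2 : (∑ lam : Fin x → Fin a, α lam) = 1 := by
        rw [← Complex.ofReal_sum] at h1
        exact_mod_cast h1
      rw [← h2]
      exact (Fintype.sum_equiv e (fun lam => α lam) (fun i => α (e.symm i))
        (fun lam => by simp)).symm
    · rw [hJ]
      exact Fintype.sum_equiv e (fun lam => detChoi lam ⊗ₖ Jh lam)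
        (fun i => ((α (e.symm i) : ℝ) : ℂ) • (detChoi (e.symm i) ⊗ₖ K (e.symm i)))
        (fun lam => by simp [hJh lam, Matrix.kronecker_smul])
end
end
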